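/- arXiv:0806.3739 — 2 statements merged into one kernel-verified Lean document; each statement's English description precedes it below -/
import Mathlib

section
/- Every partition of n with n ≥ k²+2k (k ≥ 1) is uniquely determined by its set of k-deletions: if λ and λ' are partitions of n with the same set of k-deletions, then λ = λ'. -/
/-- A partition: a nonincreasing sequence of naturals (rows indexed from 0),
with finitely many nonzero parts. -/
def IsPartition (f : ℕ → ℕ) : Prop :=
  (∀ ⦃i j : ℕ⦄, i ≤ j → f j ≤ f i) ∧ {i | f i ≠ 0}.Finite

/-- The number of cells of a partition. -/
noncomputable def psize (f : ℕ → ℕ) : ℕ := ∑ᶠ i, f i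

/-- `δ` is a `k`-deletion of `f`: a partition contained in `f` with `k` fewer cells. -/
def IsDeletion (k : ℕ) (δ f : ℕ → ℕ) : Prop :=
  IsPartition δ ∧ (∀ i, δ i ≤ f i) ∧ psize f = psize δ + k

/-- The conjugate: `conj f c` is the number of cells in (0-indexed) column `c`. -/
noncomputable def conj (f : ℕ → ℕ) (c : ℕ) : ℕ := Set.ncard {i | c < f i}

/-!
A cell of `f` outside `g` lies in no `k`-deletion of `f` (such a deletion would lie inside `g`),
so the rectangle spanned by that cell misses fewer than `k` of the `n` cells of `f`; conjugation
preserves `k`-deletions, so the same holds for columns. Apply this at the first row `i` and the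
first column `c` in which `f` and `g` differ, say with `g i < f i`; comparing the first rows of
the two partitions shows `i, c < k`. If the column rectangle also lies in `f`, two rectangles each
missing fewer than `k` cells overlap in at most `k²` cells, impossible once `n ≥ k² + 2k`.
Otherwise it lies in `g`; the rectangle of `f` through column `g i` forces row `i` of `g` to be
long, and then the first `i + 1` rows of `g` together with its column rectangle hold more than
`n` cells.
-/

open Finset

lemma psize_eq_sum_range {f : ℕ → ℕ} {B : ℕ} (hB : ∀ j, B ≤ j → f j = 0) :
    psize f = ∑ j ∈ range B, f j :=
  finsum_eq_sum_of_support_subset f fun j hj => by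
    by_contra h
    exact hj (hB j (by simpa using h))

lemma card_filter_lt_range {m N : ℕ} (h : m ≤ N) : #{j ∈ range N | j < m} = m := by
  have hfilter : {j ∈ range N | j < m} = range m := by
    ext
    simp only [mem_filter, mem_range]
    omega
  rw [hfilter, card_range]

lemma exists_ne_and_forall_lt_eq_of_ne {α : Type*} {f g : ℕ → α} (h : f ≠ g) :
    ∃ i, f i ≠ g i ∧ ∀ j < i, f j = g j := by
  classical
  have hex := Function.ne_iff.1 h
  exact ⟨Nat.find hex, Nat.find_spec hex, fun j hj => not_not.1 (Nat.find_min hex hj)⟩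

def rect (a b : ℕ) (j : ℕ) : ℕ := if j < a then b else 0

lemma psize_rect (a b : ℕ) : psize (rect a b) = a * b := by
  rw [psize_eq_sum_range (f := rect a b) (B := a) fun j hj => if_neg (by omega)]
  simp [rect, sum_ite_of_true]

lemma isPartition_rect (a b : ℕ) : IsPartition (rect a b) :=
  ⟨fun i j hij => by unfold rect; split_ifs <;> omega,
    (Set.finite_Iio a).subset fun j hj => by_contra fun h => hj (if_neg h)⟩

namespace IsPartition

variable {f g μ ν : ℕ → ℕ} {i c k : ℕ}

lemma exists_forall_ge_eq_zero (hf : IsPartition f) : ∃ B, ∀ j, B ≤ j → f j = 0 := by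
  obtain ⟨B, hB⟩ := hf.2.bddAbove
  exact ⟨B + 1, fun j hj => by_contra fun h => absurd (hB h) (by omega)⟩

lemma sum_range_le_psize (hf : IsPartition f) (m : ℕ) : ∑ j ∈ range m, f j ≤ psize f := by
  obtain ⟨B, hB⟩ := hf.exists_forall_ge_eq_zero
  rw [psize_eq_sum_range (B := max B m) fun j hj => hB j (le_of_max_le_left hj)]
  exact sum_le_sum_of_subset (range_subset_range.2 (le_max_right B m))

lemma mul_le_sum_range (hf : IsPartition f) {m : ℕ} (hm : m ≤ i + 1) :
    m * f i ≤ ∑ j ∈ range m, f j := by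
  simpa using card_nsmul_le_sum (range m) f (f i) fun j hj =>
    hf.1 (by have := mem_range.1 hj; omega)

lemma eq_of_le_of_psize_eq (hg : IsPartition g) (hle : f ≤ g) (hsize : psize f = psize g) :
    f = g := by
  obtain ⟨B, hB⟩ := hg.exists_forall_ge_eq_zero
  have hBf : ∀ j, B ≤ j → f j = 0 := fun j hj => Nat.eq_zero_of_le_zero (hB j hj ▸ hle j)
  rw [psize_eq_sum_range hBf, psize_eq_sum_range hB] at hsize
  have heq := (sum_eq_sum_iff_of_le fun j _ => hle j).1 hsize
  funext j
  by_cases hj : j < B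
  · exact heq j (mem_range.2 hj)
  · rw [hB j (by omega), hBf j (by omega)]

lemma rect_le (hf : IsPartition f) (i : ℕ) : rect (i + 1) (f i) ≤ f := fun j => by
  unfold rect
  split_ifs with h
  · exact hf.1 (by omega)
  · exact Nat.zero_le _

lemma psize_update_sub_one_add_one (hf : IsPartition f) {j : ℕ} (hj : 0 < f j) :
    psize (Function.update f j (f j - 1)) + 1 = psize f := by
  classical
  obtain ⟨B, hB⟩ := hf.exists_forall_ge_eq_zero
  have hjB : j < B := by
    by_contra h
    have := hB j (by omega)
    omega
  have hB' : ∀ x, B ≤ x → Function.update f j (f j - 1) x = 0 := fun x hx => by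
    rw [Function.update_of_ne (by omega), hB x hx]
  rw [psize_eq_sum_range hB', psize_eq_sum_range hB, sum_update_of_mem (mem_range.2 hjB),
    ← add_sum_erase _ _ (mem_range.2 hjB), sdiff_singleton_eq_erase]
  omega

lemma exists_remove_corner (hμ : IsPartition μ) (hν : IsPartition ν) (hle : μ ≤ ν)
    (hne : μ ≠ ν) :
    ∃ ρ, IsPartition ρ ∧ μ ≤ ρ ∧ ρ ≤ ν ∧ psize ρ + 1 = psize ν := by
  have hfin : {j | μ j < ν j}.Finite := hν.2.subset fun j hj => by
    simp only [ne_eq, Set.mem_ofPred_eq] at *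
    omega
  obtain ⟨j, hj, hlast⟩ := Set.exists_max_image _ id hfin <| by
    obtain ⟨j, hj⟩ := Function.ne_iff.1 hne
    exact ⟨j, lt_of_le_of_ne (hle j) hj⟩
  -- `j` is the last row where `ν` exceeds `μ`; its last cell is a corner of `ν` outside `μ`.
  have hbelow : ∀ y, j < y → ν y ≤ μ y := fun y hy => by
    by_contra h
    exact absurd (hlast y (not_le.1 h)) (by simpa using hy)
  simp only [Set.mem_ofPred_eq] at hj
  refine ⟨Function.update ν j (ν j - 1), ⟨fun x y hxy => ?_, ?_⟩, fun x => ?_, fun x => ?_,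
    hν.psize_update_sub_one_add_one (by omega)⟩
  · simp only [Function.update_apply]
    split_ifs with hy hx hx
    · omega
    · exact (Nat.sub_le _ _).trans (hν.1 (hy ▸ hxy))
    · have := hbelow y (by omega)
      have := hμ.1 (show j ≤ y by omega)
      omega
    · exact hν.1 hxy
  · refine hν.2.subset fun x hx => ?_
    by_cases hxj : x = j
    · subst hxj; simp only [Set.mem_ofPred_eq]; omega
    · simpa [Function.update_of_ne hxj] using hx
  · by_cases hxj : x = j
    · subst hxj; simp only [Function.update_self]; omega
    · simpa [Function.update_of_ne hxj] using hle x
  · by_cases hxj : x = j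
    · subst hxj; simp
    · simp [Function.update_of_ne hxj]

lemma exists_between (hμ : IsPartition μ) (hν : IsPartition ν) (hle : μ ≤ ν) {r : ℕ}
    (hr : psize μ + r ≤ psize ν) :
    ∃ ρ, IsPartition ρ ∧ μ ≤ ρ ∧ ρ ≤ ν ∧ psize ρ + r = psize ν := by
  induction r with
  | zero => exact ⟨ν, hν, hle, le_rfl, rfl⟩
  | succ r ih =>
    obtain ⟨ρ, hρ, hμρ, hρν, hsize⟩ := ih (by omega)
    obtain ⟨σ, hσ, hμσ, hσρ, hσsize⟩ :=
      exists_remove_corner hμ hρ hμρ (by rintro rfl; omega)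
    exact ⟨σ, hσ, hμσ, hσρ.trans hρν, by omega⟩

/-- Otherwise some `k`-deletion of `f` contains the `(i + 1) × f i` rectangle, so it does not
lie inside `g`. -/
lemma psize_lt_of_forall_isDeletion (hf : IsPartition f)
    (hdel : ∀ δ, IsDeletion k δ f → IsDeletion k δ g) (hlt : g i < f i) :
    psize f < (i + 1) * f i + k := by
  by_contra! h
  obtain ⟨ρ, hρ, hrectρ, hρf, hsize⟩ := (isPartition_rect (i + 1) (f i)).exists_between hf
    (hf.rect_le i) (r := k) (by rw [psize_rect]; omega)
  have hρg := (hdel ρ ⟨hρ, hρf, hsize.symm⟩).2.1 i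
  have hrect := hrectρ i
  simp only [rect, lt_add_one, if_true] at hrect
  omega

lemma finite_setOf_lt (hf : IsPartition f) (c : ℕ) : {i | c < f i}.Finite :=
  hf.2.subset fun i hi => by simp only [ne_eq, Set.mem_ofPred_eq] at *; omega

lemma succ_le_conj (hf : IsPartition f) (h : c < f i) : i + 1 ≤ conj f c :=
  calc i + 1 = (Set.Iio (i + 1)).ncard := (Set.ncard_Iio_nat _).symm
    _ ≤ conj f c := Set.ncard_le_ncard (fun _ hj => h.trans_le (hf.1 (Nat.lt_succ_iff.1 hj)))
        (hf.finite_setOf_lt c)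

lemma conj_le (hf : IsPartition f) (h : f i ≤ c) : conj f c ≤ i :=
  calc conj f c ≤ (Set.Iio i).ncard :=
        Set.ncard_le_ncard (fun j hj => by_contra fun hji => absurd (hf.1 (not_lt.1 hji))
          (by simp only [Set.mem_ofPred_eq] at hj; omega)) (Set.finite_Iio i)
    _ = i := Set.ncard_Iio_nat i

lemma lt_conj_iff (hf : IsPartition f) : i < conj f c ↔ c < f i :=
  ⟨fun h => by_contra fun h' => absurd (hf.conj_le (not_lt.1 h')) (by omega), hf.succ_le_conj⟩

protected lemma conj (hf : IsPartition f) : IsPartition (conj f) :=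
  ⟨fun _ _ hcc' => le_of_forall_lt fun _ hi =>
      hf.lt_conj_iff.2 (hcc'.trans_lt (hf.lt_conj_iff.1 hi)),
    (Set.finite_Iio (f 0)).subset fun _ hc =>
      by_contra fun h => hc (Nat.le_zero.1 (hf.conj_le (not_lt.1 h)))⟩

lemma conj_conj (hf : IsPartition f) : conj (conj f) = f :=
  funext fun _ => eq_of_forall_lt_iff fun _ => by rw [hf.conj.lt_conj_iff, hf.lt_conj_iff]

lemma conj_mono (hf : IsPartition f) (hμ : IsPartition μ) (hle : μ ≤ f) : conj μ ≤ conj f :=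
  fun _ => le_of_forall_lt fun i hi => hf.lt_conj_iff.2 ((hμ.lt_conj_iff.1 hi).trans_le (hle i))

lemma psize_conj (hf : IsPartition f) : psize (conj f) = psize f := by
  obtain ⟨B, hB⟩ := hf.exists_forall_ge_eq_zero
  rw [psize_eq_sum_range fun c hc => Nat.le_zero.1 (hf.conj_le hc), psize_eq_sum_range hB]
  calc ∑ c ∈ range (f 0), conj f c
      = ∑ c ∈ range (f 0), ∑ i ∈ range B, if c < f i then 1 else 0 := by
        refine sum_congr rfl fun c _ => ?_
        simp_rw [← hf.lt_conj_iff, sum_boole, Nat.cast_id]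
        exact (card_filter_lt_range (hf.conj_le (hB B le_rfl ▸ Nat.zero_le c))).symm
    _ = ∑ i ∈ range B, ∑ c ∈ range (f 0), if c < f i then 1 else 0 := sum_comm
    _ = ∑ i ∈ range B, f i := by
        refine sum_congr rfl fun i _ => ?_
        simp_rw [sum_boole, Nat.cast_id]
        exact card_filter_lt_range (hf.1 (Nat.zero_le i))

/-- The first `m` rows and the `conj f c × (c + 1)` rectangle of columns overlap in at most
`m * (c + 1)` cells. -/
lemma sum_range_add_mul_conj_le (hf : IsPartition f) (m c : ℕ) :
    ∑ j ∈ range m, f j + (c + 1) * conj f c ≤ (c + 1) * m + psize f := by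
  rcases le_total (conj f c) m with h | h
  · nlinarith [hf.sum_range_le_psize m]
  · have hcol : (conj f c - m) * (c + 1) ≤ ∑ j ∈ Ico m (conj f c), f j := by
      simpa using card_nsmul_le_sum _ f (c + 1) fun j hj => hf.lt_conj_iff.1 (mem_Ico.1 hj).2
    have hsplit := sum_range_add_sum_Ico f h
    have htotal := hf.sum_range_le_psize (conj f c)
    have hconj : (c + 1) * conj f c = (c + 1) * m + (conj f c - m) * (c + 1) := by
      rw [mul_comm _ (c + 1), ← mul_add, Nat.add_sub_cancel' h]
    omega

end IsPartition

lemma IsDeletion.conj {k : ℕ} {δ f : ℕ → ℕ} (hf : IsPartition f)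
    (hδ : IsDeletion k δ f) :
    IsDeletion k (conj δ) (conj f) :=
  ⟨hδ.1.conj, hf.conj_mono hδ.1 hδ.2.1, by rw [hf.psize_conj, hδ.1.psize_conj, hδ.2.2]⟩

lemma forall_isDeletion_conj {k : ℕ} {f g : ℕ → ℕ} (hf : IsPartition f) (hg : IsPartition g)
    (hdel : ∀ δ, IsDeletion k δ f → IsDeletion k δ g) (ε : ℕ → ℕ)
    (hε : IsDeletion k ε (conj f)) : IsDeletion k ε (conj g) := by
  have h := (hdel _ (hf.conj_conj ▸ hε.conj hf.conj)).conj hg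
  rwa [hε.1.conj_conj] at h

/-- Take a row `j > i` in which `v` is longer than `u`: the first `j + 1` rows of `v` hold at
least `(j + 1) * v j + i` cells. -/
lemma lt_of_forall_lt_imp_psize_lt {k i : ℕ} {u v : ℕ → ℕ} (hu : IsPartition u)
    (hv : IsPartition v) (hsize : psize u = psize v)
    (hrow : ∀ j, u j < v j → psize v < (j + 1) * v j + k)
    (hagree : ∀ j < i, u j = v j) (hlt : v i < u i) : i < k := by
  obtain ⟨j, hj⟩ : ∃ j, u j < v j := by
    by_contra! h
    exact hlt.ne (congrFun (hu.eq_of_le_of_psize_eq h hsize.symm) i)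
  have hij : i < j := by
    by_contra! hji
    rcases hji.lt_or_eq with h | rfl
    · rw [hagree j h] at hj
      exact lt_irrefl _ hj
    · exact lt_asymm hj hlt
  have htop : i * (v j + 1) ≤ ∑ l ∈ range i, v l :=
    calc i * (v j + 1) ≤ i * u i := Nat.mul_le_mul_left i ((hv.1 hij.le).trans_lt hlt)
      _ ≤ ∑ l ∈ range i, u l := hu.mul_le_sum_range (by omega)
      _ = ∑ l ∈ range i, v l := sum_congr rfl fun l hl => hagree l (mem_range.1 hl)
  have hbottom : (j + 1 - i) * v j ≤ ∑ l ∈ Ico i (j + 1), v l := by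
    simpa using card_nsmul_le_sum (Ico i (j + 1)) v (v j) fun l hl =>
      hv.1 (by have := mem_Ico.1 hl; omega)
  have hsplit := sum_range_add_sum_Ico v (show i ≤ j + 1 by omega)
  have htotal := hv.sum_range_le_psize (j + 1)
  have hrect : (j + 1) * v j = i * v j + (j + 1 - i) * v j := by
    rw [← add_mul, Nat.add_sub_cancel' (by omega)]
  have := hrow j hj
  nlinarith

section Reconstruction

variable {k n i : ℕ} {f g : ℕ → ℕ}

lemma false_of_lt_mul_add_of_lt_mul_conj_add {c : ℕ} (hf : IsPartition f)
    (hn : k ^ 2 + 2 * k ≤ psize f) (hi : i < k) (hc : c < k)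
    (hrow : psize f < (i + 1) * f i + k) (hcol : psize f < (c + 1) * conj f c + k) : False := by
  have hunion := hf.sum_range_add_mul_conj_le (i + 1) c
  have htop := hf.mul_le_sum_range (le_refl (i + 1))
  nlinarith [Nat.mul_le_mul hi hc]

lemma false_of_agree_of_lt_mul_add_of_lt_mul_conj_add {c : ℕ} (hn : k ^ 2 + 2 * k ≤ n)
    (hf : IsPartition f) (hg : IsPartition g) (hfn : psize f = n) (hgn : psize g = n)
    (hagree : ∀ j < i, f j = g j) (hi : i < k) (hc : c < k) (hrow : n < (i + 1) * f i + k)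
    (hcol_f : n < (g i + 1) * conj f (g i) + k) (hcol_g : n < (c + 1) * conj g c + k) :
    False := by
  have hunion_f := hf.sum_range_add_mul_conj_le (i + 1) (g i)
  have htop_f := hf.mul_le_sum_range (le_refl (i + 1))
  have hunion_g := hg.sum_range_add_mul_conj_le (i + 1) c
  have htop_g : i * f i + g i ≤ ∑ j ∈ range (i + 1), g j := by
    rw [sum_range_succ, ← sum_congr rfl fun j hj => hagree j (mem_range.1 hj)]
    exact Nat.add_le_add_right (hf.mul_le_sum_range (by omega)) _
  have h1 : (i + 1) * f i < (i + 1) * (g i + 1) + k := by nlinarith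
  have h2 : i * f i + g i < (i + 1) * k + k := by nlinarith [Nat.mul_le_mul_left (i + 1) hc]
  have h3 : (i + 1) * (i + 1) * f i < (i + 1) * (i + 1) * k + (i + 1) * k + k := by
    nlinarith [Nat.mul_le_mul_left (i + 1) h2]
  have h4 : (i + 1) * n + (i + 1) < (i + 1) * (i + 1) * k + 2 * (i + 1) * k + k := by
    nlinarith [Nat.mul_le_mul_left (i + 1) hrow]
  have hk : 1 ≤ (i + 1) * k := by nlinarith
  nlinarith [Nat.mul_le_mul_left (i + 1) hn]

lemma false_of_first_row_lt (hn : k ^ 2 + 2 * k ≤ n) (hf : IsPartition f) (hg : IsPartition g)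
    (hfn : psize f = n) (hgn : psize g = n)
    (hdel : ∀ δ : ℕ → ℕ, IsDeletion k δ f ↔ IsDeletion k δ g)
    (hagree : ∀ j < i, f j = g j) (hlt : g i < f i) : False := by
  have hrow_f : ∀ j, g j < f j → n < (j + 1) * f j + k := fun j hj =>
    hfn ▸ hf.psize_lt_of_forall_isDeletion (fun δ => (hdel δ).1) hj
  have hrow_g : ∀ j, f j < g j → n < (j + 1) * g j + k := fun j hj =>
    hgn ▸ hg.psize_lt_of_forall_isDeletion (fun δ => (hdel δ).2) hj
  have hcol_f : ∀ c, conj g c < conj f c → n < (c + 1) * conj f c + k := fun c hc =>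
    hfn ▸ hf.psize_conj ▸ hf.conj.psize_lt_of_forall_isDeletion
      (forall_isDeletion_conj hf hg fun δ => (hdel δ).1) hc
  have hcol_g : ∀ c, conj f c < conj g c → n < (c + 1) * conj g c + k := fun c hc =>
    hgn ▸ hg.psize_conj ▸ hg.conj.psize_lt_of_forall_isDeletion
      (forall_isDeletion_conj hg hf fun δ => (hdel δ).2) hc
  have hi : i < k := lt_of_forall_lt_imp_psize_lt hf hg (hfn.trans hgn.symm)
    (hgn ▸ hrow_g) hagree hlt
  have hconj_ne : conj f ≠ conj g := fun h => by
    have := congrArg conj h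
    rw [hf.conj_conj, hg.conj_conj] at this
    exact hlt.ne' (congrFun this i)
  obtain ⟨c, hc_ne, hc_agree⟩ := exists_ne_and_forall_lt_eq_of_ne hconj_ne
  rcases hc_ne.lt_or_gt with hc | hc
  · have hck : c < k := lt_of_forall_lt_imp_psize_lt hg.conj hf.conj
      (by rw [hf.psize_conj, hg.psize_conj, hfn, hgn]) (by rwa [hf.psize_conj, hfn])
      (fun j hj => (hc_agree j hj).symm) hc
    exact false_of_agree_of_lt_mul_add_of_lt_mul_conj_add hn hf hg hfn hgn hagree hi hck
      (hrow_f i hlt) (hcol_f (g i) ((hg.conj_le le_rfl).trans_lt (hf.succ_le_conj hlt)))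
      (hcol_g c hc)
  · have hck : c < k := lt_of_forall_lt_imp_psize_lt hf.conj hg.conj
      (by rw [hf.psize_conj, hg.psize_conj, hfn, hgn]) (by rwa [hg.psize_conj, hgn])
      hc_agree hc
    exact false_of_lt_mul_add_of_lt_mul_conj_add hf (hfn ▸ hn) hi hck (hfn ▸ hrow_f i hlt)
      (hfn ▸ hcol_f c hc)

end Reconstruction

theorem partition_reconstruction_general (k n : ℕ) (hn : k ^ 2 + 2 * k ≤ n)
    (f g : ℕ → ℕ) (hf : IsPartition f) (hg : IsPartition g)
    (hfn : psize f = n) (hgn : psize g = n)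
    (h : ∀ δ : ℕ → ℕ, IsDeletion k δ f ↔ IsDeletion k δ g) :
    f = g := by
  by_contra hne
  obtain ⟨i, hi_ne, hagree⟩ := exists_ne_and_forall_lt_eq_of_ne hne
  rcases hi_ne.lt_or_gt with hlt | hlt
  · exact false_of_first_row_lt hn hg hf hgn hfn (fun δ => (h δ).symm)
      (fun j hj => (hagree j hj).symm) hlt
  · exact false_of_first_row_lt hn hf hg hfn hgn h hagree hlt

/-- Every partition of `n ≥ k²+2k` (k ≥ 1) is determined by its set of k-deletions. -/
theorem partition_reconstruction (k n : ℕ) (hk : 1 ≤ k) (hn : k ^ 2 + 2 * k ≤ n)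
    (f g : ℕ → ℕ) (hf : IsPartition f) (hg : IsPartition g)
    (hfn : psize f = n) (hgn : psize g = n)
    (h : ∀ δ : ℕ → ℕ, IsDeletion k δ f ↔ IsDeletion k δ g) :
    f = g :=
  partition_reconstruction_general k n hn f g hf hg hfn hgn h
end

section
/- Let λ be a partition and k ≥ 1. If λ has at least k cells strictly to the right of column k (i.e., Σᵢ max(λᵢ − k, 0) ≥ k), then there exists a k-deletion δ of λ whose first k columns agree with those of λ, i.e., min(δᵢ, k) = min(λᵢ, k) for all i. -/
/-! Delete the `k` cells one at a time, each time from the last row that is longer than `k`: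
its last cell is a corner (the next row has at most `k` cells), so a partition remains, and
since the row stays at least `k` long, the first `k` columns are untouched. -/

open Function

lemma finsum_update_pred_add_one {α : Type*} [DecidableEq α] {f : α → ℕ}
    (hf : (support f).Finite) {i : α} (hi : 0 < f i) :
    ∑ᶠ j, update f i (f i - 1) j + 1 = ∑ᶠ j, f j := by
  have hg : (support (update f i (f i - 1))).Finite :=
    hf.subset fun j hj => by
      rcases eq_or_ne j i with rfl | hji
      · exact hi.ne'
      · simpa [hji] using hj
  rw [← add_finsum_cond_ne i hf, ← add_finsum_cond_ne i hg, update_self]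
  have hoff : ∑ᶠ (j) (_ : j ≠ i), update f i (f i - 1) j = ∑ᶠ (j) (_ : j ≠ i), f j :=
    finsum_congr fun j => finsum_congr fun hji => update_of_ne hji _ _
  omega

namespace IsPartition

variable {f : ℕ → ℕ}

lemma update_pred (hf : IsPartition f) {i : ℕ} (hi : f (i + 1) < f i) :
    IsPartition (update f i (f i - 1)) := by
  refine ⟨antitone_nat_of_succ_le fun n => ?_, hf.2.subset fun j hj => ?_⟩
  · have hn : f (n + 1) ≤ f n := hf.1 (by omega)
    rcases eq_or_ne n i with rfl | hni
    · simp only [update_self, update_of_ne (by omega : n + 1 ≠ n)]; omega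
    rcases eq_or_ne (n + 1) i with rfl | hsi
    · simp only [update_self, update_of_ne (by omega : n ≠ n + 1)]; omega
    simpa [hni, hsi] using hn
  · rcases eq_or_ne j i with rfl | hji
    · exact Nat.ne_zero_of_lt hi
    · simpa [hji] using hj

lemma isDeletion_update_pred (hf : IsPartition f) {i : ℕ} (hi : f (i + 1) < f i) :
    IsDeletion 1 (update f i (f i - 1)) f := by
  refine ⟨hf.update_pred hi, fun j => ?_, ?_⟩
  · rcases eq_or_ne j i with rfl | hji
    · simp
    · simp [hji]
  · exact (finsum_update_pred_add_one hf.2 (by omega)).symm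

lemma exists_last_row_gt (hf : IsPartition f) {k : ℕ} (h : ∃ i, k < f i) :
    ∃ i, k < f i ∧ f (i + 1) ≤ k := by
  obtain ⟨i, hi⟩ := h
  have hex : ∃ j, f j ≤ k := by
    obtain ⟨j, hj⟩ := hf.2.exists_notMem
    exact ⟨j, by simp_all⟩
  have hfirst : Nat.find hex ≠ 0 :=
    (Nat.find_eq_zero hex).not.mpr (by have := hf.1 (Nat.zero_le i); omega)
  obtain ⟨j, hj⟩ := Nat.exists_eq_add_one_of_ne_zero hfirst
  exact ⟨j, not_le.mp (Nat.find_min hex (by omega)), hj ▸ Nat.find_spec hex⟩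

end IsPartition

lemma IsDeletion.trans {m n : ℕ} {δ g f : ℕ → ℕ} (hδ : IsDeletion m δ g) (hg : IsDeletion n g f) :
    IsDeletion (m + n) δ f :=
  ⟨hδ.1, fun i => (hδ.2.1 i).trans (hg.2.1 i), by rw [hg.2.2, hδ.2.2, add_assoc]⟩

lemma exists_deletion_fixing_left_columns (k m : ℕ) :
    ∀ f : ℕ → ℕ, IsPartition f → m ≤ ∑ᶠ i, (f i - k) →
      ∃ δ : ℕ → ℕ, IsDeletion m δ f ∧ ∀ i, min (δ i) k = min (f i) k := by
  induction m with
  | zero => exact fun f hf _ => ⟨f, ⟨hf, fun _ => le_rfl, rfl⟩, fun _ => rfl⟩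
  | succ m ih =>
    intro f hf hm
    have hlong : ∃ i, k < f i := by
      by_contra! hshort
      have : ∑ᶠ i, (f i - k) = 0 := by
        simp [Nat.sub_eq_zero_of_le (hshort _)]
      omega
    obtain ⟨i, hik, hsucc⟩ := hf.exists_last_row_gt hlong
    set g := update f i (f i - 1)
    have hexcess : ∑ᶠ j, (g j - k) + 1 = ∑ᶠ j, (f j - k) := by
      have hfin : (support fun j => f j - k).Finite :=
        hf.2.subset fun j hj => by simp only [mem_support, Set.mem_ofPred_eq] at hj ⊢; omega
      rw [← finsum_update_pred_add_one hfin (by omega : 0 < f i - k)]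
      congr 2
      ext j
      rw [apply_update (fun _ v => v - k)]
      congr 1
      omega
    obtain ⟨δ, hδ, hδk⟩ := ih g (hf.update_pred (by omega)) (by omega)
    refine ⟨δ, hδ.trans (hf.isDeletion_update_pred (by omega)), fun j => ?_⟩
    rw [hδk]
    rcases eq_or_ne j i with rfl | hji
    · simp only [update_self, g]; omega
    · simp [g, hji]

theorem deletion_fixing_left_columns_general (k : ℕ) (f : ℕ → ℕ)
    (hf : IsPartition f) (h : k ≤ ∑ᶠ i, (f i - k)) :
    ∃ δ : ℕ → ℕ, IsDeletion k δ f ∧ ∀ i, min (δ i) k = min (f i) k :=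
  exists_deletion_fixing_left_columns k k f hf h

/-- If λ has at least k cells strictly to the right of column k, then some k-deletion
of λ agrees with λ on the first k columns. -/
theorem deletion_fixing_left_columns (k : ℕ) (hk : 1 ≤ k) (f : ℕ → ℕ)
    (hf : IsPartition f) (h : k ≤ ∑ᶠ i, (f i - k)) :
    ∃ δ : ℕ → ℕ, IsDeletion k δ f ∧ ∀ i, min (δ i) k = min (f i) k :=
  deletion_fixing_left_columns_general k f hf h
end
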